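/- Suppose d : S → ℕ ∪ {∞} satisfies: for every T ∈ S with more than one edge and every choice of auxiliary leaf, d(T) ≥ d(T') when the deleted trivalent vertex is off the v–w path, and d(T) ≥ 2·d(T') when it is on the v–w path, and d(single edge) ≥ 1. Then d(T) ≥ 2^{d(v,w)−1} for every uni-trivalent tree T with marked leaves v, w. -/

import Mathlib

open scoped Classical

/-- A uni-trivalent tree (finite tree with all vertex degrees 1 or 3) with two marked
distinct leaves `v`, `w`. -/
structure MarkedUniTrivalentTree where
  /-- number of vertices -/
  n : ℕ
  /-- the underlying graph -/
  G : SimpleGraph (Fin n)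
  tree : G.IsTree
  deg : ∀ u : Fin n, G.degree u = 1 ∨ G.degree u = 3
  /-- first marked leaf -/
  v : Fin n
  /-- second marked leaf -/
  w : Fin n
  hv : G.degree v = 1
  hw : G.degree w = 1
  hvw : v ≠ w

/-- `T'` is the reduction of `T` at the auxiliary leaf `x ∉ {v, w}` with neighbor `y`:
delete `x` and `y` (and the edges incident to `y`) and join the other two neighbors
`s`, `t` of `y` by a new edge.  This is expressed via an injection `φ` of the vertices of
`T'` onto the vertices of `T` other than `x` and `y`, preserving the marked leaves. -/
def IsReduction (T : MarkedUniTrivalentTree) (x y : Fin T.n)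
    (T' : MarkedUniTrivalentTree) : Prop :=
  T.G.Adj x y ∧ T.G.degree x = 1 ∧ x ≠ T.v ∧ x ≠ T.w ∧
  ∃ φ : Fin T'.n → Fin T.n, Function.Injective φ ∧
    (∀ z : Fin T.n, (z ≠ x ∧ z ≠ y) ↔ z ∈ Set.range φ) ∧
    φ T'.v = T.v ∧ φ T'.w = T.w ∧
    ∃ s t : Fin T.n, s ≠ t ∧ T.G.Adj y s ∧ T.G.Adj y t ∧ s ≠ x ∧ t ≠ x ∧
      ∀ a b : Fin T'.n, T'.G.Adj a b ↔
        (T.G.Adj (φ a) (φ b) ∨ (φ a = s ∧ φ b = t) ∨ (φ a = t ∧ φ b = s))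

/-! Induction on the number of vertices. A marked uni-trivalent tree with more than two vertices
has a leaf `x ∉ {v, w}` (otherwise the handshake lemma gives `2 + 3 (n - 2) = 2 (n - 1)`, i.e.
`n = 2`), and the neighbour `y` of `x` has degree three, with further neighbours `s ≠ t`. Deleting
`x`, `y` and joining `s`, `t` gives again a marked uni-trivalent tree: degrees are unchanged, and
acyclicity survives because `s` and `t` lie in different components of the tree minus `y`. A
shortest `v`–`w` path of the reduced tree uses the new edge at most once, and replacing it by
`s y t` shows that the distance drops by at most one, and not at all when the `v`–`w` path of the
original tree avoids `y` (that path then survives in the reduced tree). So along the induction the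
exponent `d(v, w) - 1` grows by one only where the hypothesis doubles the value of `d`. -/

lemma Set.ne_and_ne_of_mem_compl_pair {V : Type*} {a x y : V} (h : a ∈ ({x, y}ᶜ : Set V)) :
    a ≠ x ∧ a ≠ y := by
  simpa [not_or] using h

namespace SimpleGraph

variable {V W : Type*} {G : SimpleGraph V} {G' : SimpleGraph W}

lemma Hom.dist_le (f : G →g G') {u v : V} (h : G.Reachable u v) :
    G'.dist (f u) (f v) ≤ G.dist u v := by
  obtain ⟨p, hp⟩ := h.exists_walk_length_eq_dist
  exact (G'.dist_le (p.map f)).trans (by rw [Walk.length_map, hp])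

lemma Iso.dist_eq (f : G ≃g G') (hG : G.Connected) (u v : V) :
    G'.dist (f u) (f v) = G.dist u v :=
  (f.toHom.dist_le (hG u v)).antisymm <| by
    simpa using f.symm.toHom.dist_le (f.connected_iff.1 hG (f u) (f v))

lemma IsAcyclic.length_eq_dist_of_isPath (hG : G.IsAcyclic) {u v : V} {p : G.Walk u v}
    (hp : p.IsPath) : p.length = G.dist u v := by
  obtain ⟨q, hq, hqd⟩ := p.reachable.exists_path_of_dist
  have : p = q := congrArg Subtype.val ((hG.subsingleton_path u v).elim ⟨p, hp⟩ ⟨q, hq⟩)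
  rw [← hqd, this]

lemma Connected.eq_or_eq_of_forall_adj_eq (hG : G.Connected) {x y : V}
    (hx : ∀ z, G.Adj x z → z = y) (hy : ∀ z, G.Adj y z → z = x) (z : V) :
    z = x ∨ z = y := by
  have hreach := (reachable_iff_reflTransGen x z).1 (hG x z)
  induction hreach with
  | refl => exact .inl rfl
  | tail _ hadj ih =>
    rcases ih with rfl | rfl
    · exact .inr (hx _ hadj)
    · exact .inl (hy _ hadj)

lemma Walk.mem_support_of_forall_adj_eq {u v x y : V} (p : G.Walk u v) (hx : x ∈ p.support)
    (hxv : x ≠ v) (hN : ∀ z, G.Adj x z → z = y) : y ∈ p.support := by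
  have hnil : ¬ (p.dropUntil x hx).Nil := Walk.not_nil_of_ne hxv
  rw [← hN _ ((p.dropUntil x hx).adj_snd hnil)]
  exact p.support_dropUntil_subset_support hx
    (List.mem_of_mem_tail (Walk.snd_mem_tail_support hnil))

lemma Connected.dist_le_length_add_count_of_sup_edge [DecidableEq V] (hG : G.Connected) {s t : V}
    (hst : G.dist s t ≤ 2) {u v : V} (q : (G ⊔ edge s t).Walk u v) :
    G.dist u v ≤ q.length + q.edges.count s(s, t) := by
  induction q with
  | nil => simp
  | @cons u c v h q ih =>
    have htri := hG.dist_triangle (u := u) (v := c) (w := v)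
    rw [Walk.length_cons, Walk.edges_cons, List.count_cons]
    rcases h with h | h
    · rw [dist_eq_one_iff_adj.2 h] at htri
      split_ifs <;> omega
    · rw [edge_adj] at h
      have he : s(u, c) = s(s, t) := by
        rcases h.1 with ⟨rfl, rfl⟩ | ⟨rfl, rfl⟩ <;> simp [Sym2.eq_swap]
      have hd : G.dist u c ≤ 2 := by
        rcases h.1 with ⟨rfl, rfl⟩ | ⟨rfl, rfl⟩
        · exact hst
        · rwa [dist_comm]
      simp only [he, beq_self_eq_true, if_true]
      omega

structure IsLeafFork (G : SimpleGraph V) (x y s t : V) : Prop where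
  adj_leaf_iff : ∀ z, G.Adj x z ↔ z = y
  adj_fork_iff : ∀ z, G.Adj y z ↔ z = x ∨ z = s ∨ z = t
  ne : s ≠ t
  left_ne_leaf : s ≠ x
  right_ne_leaf : t ≠ x

def reducedGraph (G : SimpleGraph V) (x y s t : V) : SimpleGraph ({x, y}ᶜ : Set V) :=
  (G ⊔ edge s t).induce {x, y}ᶜ

@[simp]
lemma reducedGraph_adj {x y s t : V} {a b : ({x, y}ᶜ : Set V)} :
    (G.reducedGraph x y s t).Adj a b ↔ G.Adj a b ∨ (edge s t).Adj a b := Iff.rfl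

lemma reducedGraph_comm (x y s t : V) : G.reducedGraph x y s t = G.reducedGraph x y t s := by
  rw [reducedGraph, edge_comm, reducedGraph]

namespace IsLeafFork

variable {x y s t : V} (hF : G.IsLeafFork x y s t)
include hF

lemma symm : G.IsLeafFork x y t s where
  adj_leaf_iff := hF.adj_leaf_iff
  adj_fork_iff z := by rw [hF.adj_fork_iff]; tauto
  ne := hF.ne.symm
  left_ne_leaf := hF.right_ne_leaf
  right_ne_leaf := hF.left_ne_leaf

lemma adj_leaf : G.Adj x y := (hF.adj_leaf_iff y).2 rfl

lemma adj_left : G.Adj y s := (hF.adj_fork_iff s).2 (.inr (.inl rfl))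

lemma adj_right : G.Adj y t := (hF.adj_fork_iff t).2 (.inr (.inr rfl))

lemma left_mem : s ∈ ({x, y}ᶜ : Set V) := by
  simp [hF.left_ne_leaf, hF.adj_left.ne']

lemma right_mem : t ∈ ({x, y}ᶜ : Set V) := hF.symm.left_mem

lemma dist_le_two : G.dist s t ≤ 2 :=
  G.dist_le (.cons hF.adj_left.symm (.cons hF.adj_right .nil))

lemma not_reachable_induce (hG : G.IsAcyclic) :
    ¬ (G.induce {x, y}ᶜ).Reachable ⟨s, hF.left_mem⟩ ⟨t, hF.right_mem⟩ := by
  rintro ⟨p⟩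
  let q := p.map (Embedding.induce _).toHom
  have hyq : y ∉ q.support := by
    simp only [q, Walk.support_map, List.mem_map, not_exists, not_and]
    intro a _ ha
    exact a.2 (by simp [← ha])
  let fork : G.Walk s t := .cons hF.adj_left.symm (.cons hF.adj_right .nil)
  have hfork : fork.IsPath := by simp [fork, hF.ne, hF.adj_left.ne', hF.adj_right.ne]
  have : fork = q.bypass :=
    congrArg Subtype.val
      ((hG.subsingleton_path s t).elim ⟨fork, hfork⟩ ⟨q.bypass, q.bypass_isPath⟩)
  exact hyq (q.support_bypass_subset_support (this ▸ by simp [fork]))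

lemma not_adj (hG : G.IsAcyclic) : ¬ G.Adj s t := fun h =>
  hF.not_reachable_induce hG (Adj.reachable (by simpa using h))

lemma reducedGraph_eq :
    G.reducedGraph x y s t =
      G.induce {x, y}ᶜ ⊔ edge ⟨s, hF.left_mem⟩ ⟨t, hF.right_mem⟩ := by
  ext a b
  simp [reducedGraph, edge_adj, Subtype.ext_iff]

lemma isAcyclic_reducedGraph (hG : G.IsAcyclic) : (G.reducedGraph x y s t).IsAcyclic := by
  rw [hF.reducedGraph_eq]
  exact (hG.induce _).sup_edge_of_not_reachable (hF.not_reachable_induce hG)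

lemma connected_reducedGraph (hG : G.Connected) : (G.reducedGraph x y s t).Connected := by
  set R := G.reducedGraph x y s t
  let S : Set V := {x, y}ᶜ
  -- `ρ` retracts `V` onto `S` by sending `x` and `y` to `s`; every edge of `G` becomes an edge
  -- of `R` or collapses to a point.
  let ρ : V → S := fun z => if hz : z ∈ S then ⟨z, hz⟩ else ⟨s, hF.left_mem⟩
  have hρ : ∀ z (hz : z ∈ S), ρ z = ⟨z, hz⟩ := fun z hz => dif_pos hz
  have hρ' : ∀ z, z ∉ S → ρ z = ⟨s, hF.left_mem⟩ := fun z hz => dif_neg hz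
  have hout : ∀ u u', G.Adj u u' → u' ∉ S → R.Reachable (ρ u) (ρ u') := by
    intro u u' h hu'
    rw [hρ' u' hu']
    by_cases hu : u ∈ S
    · simp only [S, Set.mem_compl_iff, Set.mem_insert_iff, Set.mem_singleton_iff,
        not_not] at hu hu'
      obtain rfl | rfl := hu'
      · exact absurd ((hF.adj_leaf_iff u).1 h.symm) (not_or.1 hu).2
      rcases (hF.adj_fork_iff u).1 h.symm with rfl | rfl | rfl
      · simp at hu
      · rw [hρ _ hF.left_mem]
      · rw [hρ _ hF.right_mem]
        exact Adj.reachable (by simp [R, reducedGraph, edge_adj, hF.ne.symm])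
    · rw [hρ' u hu]
  have hstep : ∀ u u', G.Adj u u' → R.Reachable (ρ u) (ρ u') := by
    intro u u' h
    by_cases hu' : u' ∈ S
    · by_cases hu : u ∈ S
      · rw [hρ u hu, hρ u' hu']
        exact Adj.reachable (by simp [R, reducedGraph, h])
      · exact (hout u' u h.symm hu).symm
    · exact hout u u' h hu'
  refine (connected_iff _).2 ⟨fun a b => ?_, ⟨⟨s, hF.left_mem⟩⟩⟩
  have : Relation.ReflTransGen R.Adj (ρ a) (ρ b) :=
    ((reachable_iff_reflTransGen _ _).1 (hG a b)).lift' ρ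
      fun u u' h => (reachable_iff_reflTransGen _ _).1 (hstep u u' h)
  rwa [hρ _ a.2, hρ _ b.2, ← reachable_iff_reflTransGen] at this

lemma isTree_reducedGraph (hG : G.IsTree) : (G.reducedGraph x y s t).IsTree :=
  ⟨hF.connected_reducedGraph hG.connected, hF.isAcyclic_reducedGraph hG.isAcyclic⟩

lemma degree_leaf [Fintype (G.neighborSet x)] : G.degree x = 1 :=
  degree_eq_one_iff_existsUnique_adj.2 ⟨y, hF.adj_leaf, fun z h => (hF.adj_leaf_iff z).1 h⟩

lemma degree_fork [Fintype (G.neighborSet y)] : G.degree y = 3 := by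
  classical
  have : G.neighborFinset y = {x, s, t} := by
    ext z
    simp [hF.adj_fork_iff]
  rw [← card_neighborFinset_eq_degree, this, Finset.card_insert_of_notMem, Finset.card_pair hF.ne]
  simp [hF.left_ne_leaf.symm, hF.right_ne_leaf.symm]

section Degree

variable [Fintype V] [DecidableRel G.Adj]

lemma mem_compl_of_degree_eq_one {u : V} (hu : G.degree u = 1) (hux : u ≠ x) :
    u ∈ ({x, y}ᶜ : Set V) := by
  have huy : u ≠ y := by
    rintro rfl
    have := hF.degree_fork
    omega
  simp [hux, huy]

lemma degree_reducedGraph_of_eq_left (hG : G.IsAcyclic) (a : ({x, y}ᶜ : Set V))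
    (ha : (a : V) = s) : (G.reducedGraph x y s t).degree a = G.degree a := by
  classical
  have hN : ((G.reducedGraph x y s t).neighborFinset a).map (.subtype (· ∈ _)) =
      insert t ((G.neighborFinset s).erase y) := by
    ext u
    have hsx : ¬ G.Adj s x := fun h => hF.adj_left.ne' ((hF.adj_leaf_iff s).1 h.symm)
    have := hF.ne
    have := hF.right_ne_leaf
    have := hF.adj_right.ne'
    simp only [Finset.mem_map, mem_neighborFinset]
    simp [edge_adj, ha]
    grind
  have hy : y ∈ G.neighborFinset s := by simpa using hF.adj_left.symm
  have ht : t ∉ (G.neighborFinset s).erase y := by simp [hF.not_adj hG]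
  rw [← card_neighborFinset_eq_degree, ← card_neighborFinset_eq_degree, ← Finset.card_map, hN,
    ha, Finset.card_insert_of_notMem ht, Finset.card_erase_add_one hy]

lemma degree_reducedGraph (hG : G.IsAcyclic) (a : ({x, y}ᶜ : Set V)) :
    (G.reducedGraph x y s t).degree a = G.degree a := by
  classical
  by_cases hs : (a : V) = s
  · exact hF.degree_reducedGraph_of_eq_left hG a hs
  by_cases ht : (a : V) = t
  · rw [reducedGraph_comm]
    exact hF.symm.degree_reducedGraph_of_eq_left hG a ht
  have ha := Set.ne_and_ne_of_mem_compl_pair a.2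
  have hN : ((G.reducedGraph x y s t).neighborFinset a).map (.subtype (· ∈ _)) =
      G.neighborFinset a := by
    ext u
    have hux : G.Adj a u → u ≠ x := fun h hu => ha.2 ((hF.adj_leaf_iff a).1 (hu ▸ h.symm))
    have huy : G.Adj a u → u ≠ y := fun h hu => by
      rcases (hF.adj_fork_iff a).1 (hu ▸ h.symm) with h' | h' | h' <;> simp_all
    simp only [Finset.mem_map, mem_neighborFinset]
    simp [edge_adj, hs, ht]
    grind
  rw [← card_neighborFinset_eq_degree, ← card_neighborFinset_eq_degree, ← Finset.card_map, hN]

end Degree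

lemma dist_le_dist_reducedGraph_add_one (hG : G.IsTree) (a b : ({x, y}ᶜ : Set V)) :
    G.dist a b ≤ (G.reducedGraph x y s t).dist a b + 1 := by
  classical
  obtain ⟨p, hp, hpd⟩ := (hF.connected_reducedGraph hG.connected).exists_path_of_dist a b
  let ι : (G ⊔ edge s t).induce {x, y}ᶜ ↪g G ⊔ edge s t := Embedding.induce _
  let q := p.map ι.toHom
  have hcount : q.edges.count s(s, t) ≤ 1 :=
    List.nodup_iff_count_le_one.1 (hp.map ι.injective).isTrail.edges_nodup _
  have hlen : q.length = (G.reducedGraph x y s t).dist a b := (p.length_map _).trans hpd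
  calc G.dist a b ≤ q.length + q.edges.count s(s, t) :=
        hG.connected.dist_le_length_add_count_of_sup_edge hF.dist_le_two q
    _ ≤ _ := by omega

lemma dist_reducedGraph_of_isPath (hG : G.IsTree) {a b : ({x, y}ᶜ : Set V)} {p : G.Walk a b}
    (hp : p.IsPath) (hy : y ∉ p.support) : (G.reducedGraph x y s t).dist a b = G.dist a b := by
  have hle : G ≤ G ⊔ edge s t := le_sup_left
  have hsupp : ∀ z ∈ (p.mapLe hle).support, z ∈ ({x, y}ᶜ : Set V) := by
    intro z hz
    rw [Walk.support_mapLe_eq_support] at hz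
    have hzy : z ≠ y := fun h => hy (h ▸ hz)
    have hzx : z ≠ x := by
      rintro rfl
      exact hy (p.mem_support_of_forall_adj_eq hz (Set.ne_and_ne_of_mem_compl_pair b.2).1.symm
        fun w h => (hF.adj_leaf_iff w).1 h)
    simp [hzx, hzy]
  let ι : (G ⊔ edge s t).induce {x, y}ᶜ ↪g G ⊔ edge s t := Embedding.induce _
  let q : ((G ⊔ edge s t).induce {x, y}ᶜ).Walk a b := (p.mapLe hle).induce _ hsupp
  have hq : q.map ι.toHom = p.mapLe hle := Walk.map_induce _ _
  have hqp : q.IsPath := by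
    rw [← Walk.isPath_map_iff_of_injective (f := ι.toHom) ι.injective, hq]
    exact hp.mapLe hle
  have hlen : q.length = p.length := by
    have := congrArg Walk.length hq
    rw [Walk.length_map] at this
    exact this.trans (p.length_mapLe hle)
  rw [← hG.isAcyclic.length_eq_dist_of_isPath hp, ← hlen]
  exact ((hF.isAcyclic_reducedGraph hG.isAcyclic).length_eq_dist_of_isPath hqp).symm

end IsLeafFork

end SimpleGraph

namespace MarkedUniTrivalentTree

open SimpleGraph

variable (T : MarkedUniTrivalentTree)

lemma exists_leaf_ne (h : 3 ≤ T.n) : ∃ x, T.G.degree x = 1 ∧ x ≠ T.v ∧ x ≠ T.w := by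
  by_contra! hcon
  have h3 : ∀ z ∈ Finset.univ \ {T.v, T.w}, T.G.degree z = 3 := fun z hz => by
    simp only [Finset.mem_sdiff, Finset.mem_univ, Finset.mem_insert, Finset.mem_singleton,
      not_or, true_and] at hz
    exact (T.deg z).resolve_left fun h1 => hz.2 (hcon z h1 hz.1)
  have hsum := T.G.sum_degrees_eq_twice_card_edges
  have hE := T.tree.card_edgeFinset
  rw [← Finset.sum_sdiff (Finset.subset_univ {T.v, T.w}), Finset.sum_congr rfl h3,
    Finset.sum_pair T.hvw, T.hv, T.hw, Finset.sum_const, smul_eq_mul,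
    Finset.card_sdiff_of_subset (Finset.subset_univ _), Finset.card_pair T.hvw] at hsum
  simp only [Finset.card_univ, Fintype.card_fin] at hsum hE
  omega

lemma exists_isLeafFork (h : 3 ≤ T.n) :
    ∃ x y s t, T.G.IsLeafFork x y s t ∧ x ≠ T.v ∧ x ≠ T.w := by
  obtain ⟨x, hx, hxv, hxw⟩ := T.exists_leaf_ne h
  obtain ⟨y, hxy, hy⟩ := degree_eq_one_iff_existsUnique_adj.1 hx
  have hdy : T.G.degree y = 3 := (T.deg y).resolve_left fun hy1 => by
    obtain ⟨x', -, hx'⟩ := degree_eq_one_iff_existsUnique_adj.1 hy1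
    have hxy_all := T.tree.connected.eq_or_eq_of_forall_adj_eq hy
      fun z hz => (hx' z hz).trans (hx' x hxy.symm).symm
    have := Finset.card_le_card (s := Finset.univ) (t := {x, y}) fun z _ => by
      simpa using hxy_all z
    have := Finset.card_le_two (a := x) (b := y)
    simp only [Finset.card_univ, Fintype.card_fin] at *
    omega
  have hxN : x ∈ T.G.neighborFinset y := by simpa using hxy.symm
  obtain ⟨s, t, hst, hset⟩ : ∃ s t, s ≠ t ∧ (T.G.neighborFinset y).erase x = {s, t} :=
    Finset.card_eq_two.1 (by rw [Finset.card_erase_of_mem hxN, card_neighborFinset_eq_degree, hdy])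
  have hN : T.G.neighborFinset y = {x, s, t} := by rw [← Finset.insert_erase hxN, hset]
  have hs : s ∈ (T.G.neighborFinset y).erase x := by simp [hset]
  have ht : t ∈ (T.G.neighborFinset y).erase x := by simp [hset]
  refine ⟨x, y, s, t, ⟨fun z => ⟨hy z, fun h => h ▸ hxy⟩, fun z => ?_, hst,
    Finset.ne_of_mem_erase hs, Finset.ne_of_mem_erase ht⟩, hxv, hxw⟩
  rw [← mem_neighborFinset, hN]
  simp

section Reduce

variable {T} {x y s t : Fin T.n}

lemma degree_overFin_reducedGraph (hF : T.G.IsLeafFork x y s t) (a : ({x, y}ᶜ : Set (Fin T.n))) :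
    ((T.G.reducedGraph x y s t).overFin rfl).degree ((T.G.reducedGraph x y s t).overFinIso rfl a) =
      T.G.degree a := by
  rw [Iso.degree_eq]
  convert hF.degree_reducedGraph T.tree.isAcyclic a

variable (hF : T.G.IsLeafFork x y s t) (hxv : x ≠ T.v) (hxw : x ≠ T.w)

noncomputable def reduce : MarkedUniTrivalentTree where
  n := Fintype.card ({x, y}ᶜ : Set (Fin T.n))
  G := (T.G.reducedGraph x y s t).overFin rfl
  tree := (overFinIso _ rfl).isTree_iff.1 (hF.isTree_reducedGraph T.tree)
  deg u := by
    obtain ⟨a, rfl⟩ := ((T.G.reducedGraph x y s t).overFinIso rfl).surjective u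
    rw [degree_overFin_reducedGraph hF]
    exact T.deg a
  v := (T.G.reducedGraph x y s t).overFinIso rfl
    ⟨T.v, hF.mem_compl_of_degree_eq_one T.hv hxv.symm⟩
  w := (T.G.reducedGraph x y s t).overFinIso rfl
    ⟨T.w, hF.mem_compl_of_degree_eq_one T.hw hxw.symm⟩
  hv := (degree_overFin_reducedGraph hF _).trans T.hv
  hw := (degree_overFin_reducedGraph hF _).trans T.hw
  hvw h := T.hvw (by simpa using h)

lemma isReduction_reduce : IsReduction T x y (reduce hF hxv hxw) := by
  let e := (T.G.reducedGraph x y s t).overFinIso rfl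
  refine ⟨hF.adj_leaf, hF.degree_leaf, hxv, hxw, fun a => (e.symm a : Fin T.n),
    Subtype.val_injective.comp e.symm.injective, fun z => ⟨fun hz => ?_, ?_⟩,
    by simp [reduce, e], by simp [reduce, e], s, t, hF.ne, hF.adj_left, hF.adj_right,
    hF.left_ne_leaf, hF.right_ne_leaf, fun a b => ?_⟩
  · exact ⟨e ⟨z, by simpa [not_or] using hz⟩, by simp⟩
  · rintro ⟨a, rfl⟩
    exact Set.ne_and_ne_of_mem_compl_pair (e.symm a).2
  · refine e.symm.map_adj_iff.symm.trans ?_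
    rw [reducedGraph_adj, edge_adj]
    have := hF.ne
    grind

lemma n_reduce_lt : (reduce hF hxv hxw).n < T.n :=
  (Fintype.card_lt_of_injective_of_notMem ((↑) : ({x, y}ᶜ : Set (Fin T.n)) → Fin T.n)
    Subtype.val_injective (b := x) (by simp)).trans_eq (Fintype.card_fin _)

lemma dist_reduce : (reduce hF hxv hxw).G.dist (reduce hF hxv hxw).v (reduce hF hxv hxw).w =
    (T.G.reducedGraph x y s t).dist ⟨T.v, hF.mem_compl_of_degree_eq_one T.hv hxv.symm⟩
      ⟨T.w, hF.mem_compl_of_degree_eq_one T.hw hxw.symm⟩ :=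
  Iso.dist_eq _ (hF.connected_reducedGraph T.tree.connected) _ _

end Reduce

lemma exists_reduction (h : 3 ≤ T.n) : ∃ x y T', IsReduction T x y T' ∧ T'.n < T.n ∧
    (((∃ p : T.G.Walk T.v T.w, p.IsPath ∧ y ∉ p.support) ∧
        T.G.dist T.v T.w ≤ T'.G.dist T'.v T'.w) ∨
      ((∀ p : T.G.Walk T.v T.w, p.IsPath → y ∈ p.support) ∧
        T.G.dist T.v T.w ≤ T'.G.dist T'.v T'.w + 1)) := by
  obtain ⟨x, y, s, t, hF, hxv, hxw⟩ := T.exists_isLeafFork h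
  refine ⟨x, y, reduce hF hxv hxw, isReduction_reduce hF hxv hxw, n_reduce_lt hF hxv hxw, ?_⟩
  rw [dist_reduce]
  set v' : ({x, y}ᶜ : Set (Fin T.n)) := ⟨T.v, hF.mem_compl_of_degree_eq_one T.hv hxv.symm⟩
  set w' : ({x, y}ᶜ : Set (Fin T.n)) := ⟨T.w, hF.mem_compl_of_degree_eq_one T.hw hxw.symm⟩
  obtain ⟨P, hP, hPd⟩ := T.tree.connected.exists_path_of_dist T.v T.w
  by_cases hy : y ∈ P.support
  · exact .inr ⟨fun p hp => (T.tree.existsUnique_path _ _).unique hP hp ▸ hy,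
      hF.dist_le_dist_reducedGraph_add_one T.tree v' w'⟩
  · exact .inl ⟨⟨P, hP, hy⟩,
      (hF.dist_reducedGraph_of_isPath T.tree (a := v') (b := w') hP hy).ge⟩

lemma two_le_n : 2 ≤ T.n := by
  have := T.hvw
  omega

lemma card_edgeFinset_eq_one_of_n_le_two (h : T.n ≤ 2) : T.G.edgeFinset.card = 1 := by
  have := T.tree.card_edgeFinset
  have := T.two_le_n
  simp only [Fintype.card_fin] at *
  omega

lemma dist_eq_one_of_n_le_two (h : T.n ≤ 2) : T.G.dist T.v T.w = 1 := by
  obtain ⟨u, hvu, -⟩ := degree_eq_one_iff_existsUnique_adj.1 T.hv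
  have huw : u = T.w := by
    have := T.hvw
    have := hvu.ne
    omega
  rw [dist_eq_one_iff_adj, ← huw]
  exact hvu

end MarkedUniTrivalentTree

/-- If `d : S → ℕ ∪ {∞}` satisfies `d ≥ 1` on single-edge trees, `d T ≥ d T'` for every
reduction whose deleted trivalent vertex `y` is off the `v`–`w` path, and `d T ≥ 2 · d T'`
for every reduction with `y` on the `v`–`w` path, then `d T ≥ 2 ^ (d(v,w) - 1)` for every
marked uni-trivalent tree `T`. -/
theorem stmt13 (d : MarkedUniTrivalentTree → ℕ∞)
    (hbase : ∀ T : MarkedUniTrivalentTree, T.G.edgeFinset.card = 1 → 1 ≤ d T)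
    (hoff : ∀ (T : MarkedUniTrivalentTree) (x y : Fin T.n) (T' : MarkedUniTrivalentTree),
      IsReduction T x y T' → (∃ p : T.G.Walk T.v T.w, p.IsPath ∧ y ∉ p.support) →
      d T' ≤ d T)
    (hon : ∀ (T : MarkedUniTrivalentTree) (x y : Fin T.n) (T' : MarkedUniTrivalentTree),
      IsReduction T x y T' → (∀ p : T.G.Walk T.v T.w, p.IsPath → y ∈ p.support) →
      2 * d T' ≤ d T) :
    ∀ T : MarkedUniTrivalentTree, (2 : ℕ∞) ^ (T.G.dist T.v T.w - 1) ≤ d T := by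
  intro T
  induction T using (measure MarkedUniTrivalentTree.n).wf.induction with | h T ih =>
  rcases le_or_gt T.n 2 with h | h
  · rw [T.dist_eq_one_of_n_le_two h]
    exact hbase T (T.card_edgeFinset_eq_one_of_n_le_two h)
  obtain ⟨x, y, T', hred, hlt, ⟨hoffpath, hdist⟩ | ⟨honpath, hdist⟩⟩ :=
    T.exists_reduction h
  · calc (2 : ℕ∞) ^ (T.G.dist T.v T.w - 1) ≤ 2 ^ (T'.G.dist T'.v T'.w - 1) :=
          pow_le_pow_right₀ one_le_two (by omega)
      _ ≤ d T' := ih T' hlt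
      _ ≤ d T := hoff T x y T' hred hoffpath
  · calc (2 : ℕ∞) ^ (T.G.dist T.v T.w - 1) ≤ 2 * 2 ^ (T'.G.dist T'.v T'.w - 1) := by
          rw [← pow_succ']
          exact pow_le_pow_right₀ one_le_two (by omega)
      _ ≤ 2 * d T' := by gcongr; exact ih T' hlt
      _ ≤ d T := hon T x y T' hred honpath
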